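/- arXiv:2311.16259 — 11 statements merged into one kernel-verified Lean document; each statement's English description precedes it below -/
import Mathlib

section
/- Let Γ be a group and π : Γ → Γ̄ a surjective group homomorphism. If Γ has commuting cyclic conjugates, then Γ̄ has commuting cyclic conjugates. -/
/-!
Every finitely generated subgroup of `G'` is the image of a finitely generated subgroup `H` of
`G` (lift a finite generating set), and applying `π` to the relations witnessed by `(t, n)` for
`H` shows that `(π t, n)` witnesses them for `π H`.
-/

/-- A group `G` has *commuting cyclic conjugates* if for every finitely generated
subgroup `H ≤ G` there exist `t ∈ G` and `n ∈ ℕ_{≥2} ∪ {∞}` such that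
`[H, t^p H t^{-p}] = 1` for all `1 ≤ p < n` and `[H, t^n] = 1` (reading `t^∞ = 1`,
so that for `n = ∞` the second condition is vacuous). -/
def CommutingCyclicConjugates (G : Type*) [Group G] : Prop :=
  ∀ H : Subgroup G, H.FG → ∃ (t : G) (n : ℕ∞), 2 ≤ n ∧
    (∀ p : ℕ, 1 ≤ p → (p : ℕ∞) < n →
      ∀ h ∈ H, ∀ h' ∈ H, Commute h (t ^ p * h' * (t ^ p)⁻¹)) ∧
    (∀ m : ℕ, (m : ℕ∞) = n → ∀ h ∈ H, Commute h (t ^ m))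

def Subgroup.CommutesWithCyclicConjugates {G : Type*} [Group G] (H : Subgroup G) (t : G)
    (n : ℕ∞) : Prop :=
  2 ≤ n ∧
    (∀ p : ℕ, 1 ≤ p → (p : ℕ∞) < n →
      ∀ h ∈ H, ∀ h' ∈ H, Commute h (t ^ p * h' * (t ^ p)⁻¹)) ∧
    (∀ m : ℕ, (m : ℕ∞) = n → ∀ h ∈ H, Commute h (t ^ m))

namespace Subgroup

variable {G G' : Type*} [Group G] [Group G']

theorem CommutesWithCyclicConjugates.map {H : Subgroup G} {t : G} {n : ℕ∞}
    (hH : H.CommutesWithCyclicConjugates t n) (f : G →* G') :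
    (H.map f).CommutesWithCyclicConjugates (f t) n := by
  obtain ⟨hn, hconj, hpow⟩ := hH
  refine ⟨hn, ?_, ?_⟩
  · rintro p hp hpn _ ⟨h, hh, rfl⟩ _ ⟨h', hh', rfl⟩
    simpa only [map_mul, map_pow, map_inv] using (hconj p hp hpn h hh h' hh').map f
  · rintro m hm _ ⟨h, hh, rfl⟩
    simpa only [map_pow] using (hpow m hm h hh).map f

theorem FG.exists_fg_map_eq_of_surjective {f : G →* G'} (hf : Function.Surjective f)
    {H' : Subgroup G'} (hH' : H'.FG) : ∃ H : Subgroup G, H.FG ∧ H.map f = H' := by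
  classical
  obtain ⟨S', rfl⟩ := hH'
  refine ⟨closure (S'.image (Function.surjInv hf)), ⟨_, rfl⟩, ?_⟩
  rw [MonoidHom.map_closure, Finset.coe_image, Set.image_image]
  simp only [Function.surjInv_eq hf, Set.image_id']

end Subgroup

/-- A quotient of a group with commuting cyclic conjugates has commuting cyclic
conjugates. -/
theorem quotient_commutingCyclicConjugates {G G' : Type*} [Group G] [Group G']
    (π : G →* G') (hπ : Function.Surjective π)
    (hG : CommutingCyclicConjugates G) : CommutingCyclicConjugates G' := by
  intro H' hH'
  obtain ⟨H, hH, rfl⟩ := hH'.exists_fg_map_eq_of_surjective hπ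
  obtain ⟨t, n, hw⟩ : ∃ t n, H.CommutesWithCyclicConjugates t n := hG H hH
  exact ⟨π t, n, hw.map π⟩
end

section
/- Let {Γ_i}_{i ∈ I} be a family of groups, each with commuting ℤ-conjugates. Then the direct product ∏_{i ∈ I} Γ_i has commuting ℤ-conjugates. -/
/-- A group `G` has *commuting ℤ-conjugates* if for every finitely generated
subgroup `H ≤ G` there exists `t ∈ G` such that `[H, t^p H t^{-p}] = 1` for all
integers `p ≥ 1`. -/
def CommutingZConjugates (G : Type*) [Group G] : Prop :=
  ∀ H : Subgroup G, H.FG → ∃ t : G,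
    ∀ p : ℕ, 1 ≤ p → ∀ h ∈ H, ∀ h' ∈ H, Commute h (t ^ p * h' * (t ^ p)⁻¹)

/-! The projection of a finitely generated `H ≤ ∏ Γ i` to each factor is finitely generated, so
`Γ i` supplies a witness `t i` for it; the family `t` is a witness for `H`, because commutation
in a product is coordinatewise. -/

theorem Subgroup.FG.map {G G' : Type*} [Group G] [Group G'] {H : Subgroup G} (hH : H.FG)
    (f : G →* G') : (H.map f).FG := by
  classical
  obtain ⟨S, rfl⟩ := hH
  exact ⟨S.image f, by rw [Finset.coe_image, MonoidHom.map_closure]⟩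

/-- The direct product of a family of groups with commuting ℤ-conjugates has
commuting ℤ-conjugates. -/
theorem pi_commutingZConjugates {I : Type*} (Γ : I → Type*) [∀ i, Group (Γ i)]
    (h : ∀ i, CommutingZConjugates (Γ i)) :
    CommutingZConjugates (∀ i, Γ i) := by
  intro H hH
  choose t ht using fun i => h i (H.map (Pi.evalMonoidHom Γ i)) (hH.map _)
  refine ⟨t, fun p hp a ha b hb => Commute.pi fun i => ?_⟩
  exact ht i p hp (a i) (H.mem_map_of_mem _ ha) (b i) (H.mem_map_of_mem _ hb)
end

section
/- Let {Γ_i}_{i ∈ I} be a family of groups, each with commuting ℤ-conjugates. Then the direct sum (restricted direct product) ⊕_{i ∈ I} Γ_i has commuting ℤ-conjugates. -/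
/-- The direct sum (restricted direct product) of a family of groups: the subgroup
of the direct product consisting of elements whose coordinates equal the identity
for all but finitely many indices. -/
def directSum {I : Type*} (Γ : I → Type*) [∀ i, Group (Γ i)] : Subgroup (∀ i, Γ i) where
  carrier := {f | {i | f i ≠ 1}.Finite}
  one_mem' := by
    simp
  mul_mem' := by
    intro a b ha hb
    refine (ha.union hb).subset fun i hi => ?_
    rw [Set.mem_union]
    by_contra hc
    push_neg at hc
    obtain ⟨h1, h2⟩ := hc
    simp only [Set.mem_setOf_eq, not_not] at h1 h2
    exact hi (by simp [Pi.mul_apply, h1, h2])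
  inv_mem' := by
    intro a ha
    refine ha.subset fun i hi => ?_
    simp only [Set.mem_setOf_eq, Pi.inv_apply, ne_eq, inv_eq_one] at hi
    exact hi

namespace directSum

variable {I : Type*} {Γ : I → Type*} [∀ i, Group (Γ i)]

def eval (i : I) : directSum Γ →* Γ i :=
  (Pi.evalMonoidHom Γ i).comp (directSum Γ).subtype

@[simp]
theorem eval_apply (i : I) (g : directSum Γ) : eval i g = (g : ∀ i, Γ i) i := rfl

theorem piecewise_one_mem {J : Set I} [DecidablePred (· ∈ J)] (hJ : J.Finite) (t : ∀ i, Γ i) :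
    J.piecewise t 1 ∈ directSum Γ :=
  hJ.subset fun _ hi => by_contra fun hiJ => hi (Set.piecewise_eq_of_notMem _ _ _ hiJ)

theorem commute_iff_forall_eval {g g' : directSum Γ} :
    Commute g g' ↔ ∀ i, Commute (eval i g) (eval i g') := by
  rw [← Pi.commute_iff]
  exact ⟨fun hc => hc.map (directSum Γ).subtype,
    fun hc => hc.of_map (directSum Γ).subtype_injective⟩

theorem exists_finite_eq_one_of_fg {H : Subgroup (directSum Γ)} (hH : H.FG) :
    ∃ J : Set I, J.Finite ∧ ∀ g ∈ H, ∀ i ∉ J, eval i g = 1 := by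
  obtain ⟨S, rfl⟩ := hH
  refine ⟨⋃ s ∈ (S : Set (directSum Γ)), {i | (s : ∀ i, Γ i) i ≠ 1},
    S.finite_toSet.biUnion fun s _ => s.2, fun g hg => ?_⟩
  suffices Subgroup.closure (S : Set (directSum Γ)) ≤
      (Subgroup.pi _ fun _ => ⊥).comap (directSum Γ).subtype from this hg
  rw [Subgroup.closure_le]
  intro s hs i hi
  by_contra hne
  exact hi (Set.mem_biUnion hs hne)

end directSum

/-- The direct sum of a family of groups with commuting ℤ-conjugates has
commuting ℤ-conjugates. -/
theorem directSum_commutingZConjugates {I : Type*} (Γ : I → Type*) [∀ i, Group (Γ i)]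
    (h : ∀ i, CommutingZConjugates (Γ i)) :
    CommutingZConjugates ↥(directSum Γ) := by
  classical
  intro H hH
  obtain ⟨J, hJ, hH_one⟩ := directSum.exists_finite_eq_one_of_fg hH
  choose t ht using fun i => h i (H.map (directSum.eval i)) (hH.map _)
  refine ⟨⟨J.piecewise t 1, directSum.piecewise_one_mem hJ t⟩, fun p hp a ha b hb => ?_⟩
  rw [directSum.commute_iff_forall_eval]
  intro i
  by_cases hi : i ∈ J
  · simpa [Set.piecewise_eq_of_mem _ _ _ hi] using
      ht i p hp _ (Subgroup.mem_map_of_mem _ ha) _ (Subgroup.mem_map_of_mem _ hb)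
  · rw [hH_one a ha i hi]
    exact Commute.one_left _
end

section
/- Let X be a topological space and T a group of compactly supported homeomorphisms of X. Suppose that for every compact subset K ⊂ X there exists t ∈ T such that the sets t^p(K), p ≥ 1, are pairwise disjoint. Then every group G with T ≤ G ≤ Homeo_c(X) (the group of compactly supported homeomorphisms) has commuting ℤ-conjugates. -/
/-- The group of self-homeomorphisms of `X`, with composition as multiplication. -/
instance homeoGroup (X : Type*) [TopologicalSpace X] : Group (X ≃ₜ X) where
  mul f g := g.trans f
  one := Homeomorph.refl X
  inv := Homeomorph.symm
  mul_assoc _ _ _ := rfl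
  one_mul _ := rfl
  mul_one _ := rfl
  inv_mul_cancel a := Homeomorph.ext fun x => a.symm_apply_apply x

/-!
A finitely generated `H ≤ G` is supported in the compact set `K`, the union of the closed
supports of its generators. If `t` displaces `K` as in the hypothesis, then `K` and `t^p(K)`
are disjoint (apply `t^{-p}` to the disjoint sets `t^p(K)` and `t^{2p}(K)`). The conjugate
`t^p H t^{-p}` is supported in `t^p(K)`, and homeomorphisms with disjoint supports commute.
-/

open Set

namespace Homeomorph

variable {X : Type*} [TopologicalSpace X]

def supportedIn (K : Set X) : Subgroup (X ≃ₜ X) where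
  carrier := {f | ∀ x ∉ K, f x = x}
  one_mem' _ _ := rfl
  mul_mem' {f g} hf hg x hx := by
    change f (g x) = x
    rw [hg x hx, hf x hx]
  inv_mem' {f} hf x hx := by
    change f.symm x = x
    rw [f.symm_apply_eq, hf x hx]

theorem supportedIn_mono {K L : Set X} (hKL : K ⊆ L) : supportedIn K ≤ supportedIn L :=
  fun _ hf x hx => hf x fun hxK => hx (hKL hxK)

theorem mem_supportedIn_closure_support (f : X ≃ₜ X) :
    f ∈ supportedIn (closure {x | f x ≠ x}) :=
  fun _ hx => by_contra fun hfx => hx (subset_closure hfx)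

theorem conj_mem_supportedIn_image {K : Set X} {f : X ≃ₜ X} (u : X ≃ₜ X)
    (hf : f ∈ supportedIn K) : u * f * u⁻¹ ∈ supportedIn (u '' K) := by
  intro x hx
  have hux : u.symm x ∉ K := fun hK => hx ⟨u.symm x, hK, u.apply_symm_apply x⟩
  change u (f (u.symm x)) = x
  rw [hf _ hux, u.apply_symm_apply]

theorem commute_of_mem_supportedIn {A B : Set X} (hAB : Disjoint A B) {f g : X ≃ₜ X}
    (hf : f ∈ supportedIn A) (hg : g ∈ supportedIn B) : Commute f g := by
  have hperm : Equiv.Perm.Disjoint f.toEquiv g.toEquiv := fun x => by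
    by_cases hxA : x ∈ A
    · exact Or.inr (hg x (hAB.notMem_of_mem_left hxA))
    · exact Or.inl (hf x hxA)
  exact toEquiv_injective hperm.commute

theorem image_mul (f g : X ≃ₜ X) (K : Set X) : (f * g) '' K = f '' (g '' K) :=
  (image_image f g K).symm

theorem disjoint_image_pow_of_disjoint_image_pow_two_mul {t : X ≃ₜ X} {K : Set X} {p : ℕ}
    (h : Disjoint ((t ^ p : X ≃ₜ X) '' K) ((t ^ (2 * p) : X ≃ₜ X) '' K)) :
    Disjoint K ((t ^ p : X ≃ₜ X) '' K) := by
  rw [two_mul, pow_add, image_mul] at h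
  exact (disjoint_image_iff (t ^ p).injective).mp h

end Homeomorph

open Homeomorph

theorem commutingZConjugates_of_displacement_general {X : Type*} [TopologicalSpace X]
    (T G : Subgroup (X ≃ₜ X))
    (hG : ∀ f ∈ G, IsCompact (closure {x | f x ≠ x}))
    (hTG : T ≤ G)
    (hdisp : ∀ K : Set X, IsCompact K → ∃ t ∈ T,
      ∀ p q : ℕ, 1 ≤ p → 1 ≤ q → p ≠ q →
        Disjoint ((t ^ p : X ≃ₜ X) '' K) ((t ^ q : X ≃ₜ X) '' K)) :
    CommutingZConjugates ↥G := by
  rintro H ⟨S, rfl⟩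
  set K := ⋃ s ∈ S, closure {x | (s : X ≃ₜ X) x ≠ x}
  have hK : IsCompact K := S.finite_toSet.isCompact_biUnion fun s _ => hG s s.2
  have hH : Subgroup.closure (S : Set G) ≤ (supportedIn K).comap G.subtype :=
    (Subgroup.closure_le _).mpr fun s hs =>
      supportedIn_mono
        (subset_biUnion_of_mem (u := fun s : G => closure {x | (s : X ≃ₜ X) x ≠ x}) hs)
        (mem_supportedIn_closure_support (s : X ≃ₜ X))
  obtain ⟨t, htT, ht⟩ := hdisp K hK
  refine ⟨⟨t, hTG htT⟩, fun p hp h hh h' hh' => Subtype.ext ?_⟩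
  have hdisj : Disjoint K ((t ^ p : X ≃ₜ X) '' K) :=
    disjoint_image_pow_of_disjoint_image_pow_two_mul (ht p (2 * p) hp (by omega) (by omega))
  exact commute_of_mem_supportedIn hdisj (hH hh) (conj_mem_supportedIn_image (t ^ p) (hH hh'))

/-- Let `T` be a group of compactly supported homeomorphisms of `X` such that every
compact set `K ⊆ X` admits `t ∈ T` whose powers `t^p`, `p ≥ 1`, displace `K` to
pairwise disjoint sets.  Then every group `G` of compactly supported homeomorphisms
with `T ≤ G` has commuting ℤ-conjugates. -/
theorem commutingZConjugates_of_displacement {X : Type*} [TopologicalSpace X]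
    (T G : Subgroup (X ≃ₜ X))
    (hT : ∀ f ∈ T, IsCompact (closure {x | f x ≠ x}))
    (hG : ∀ f ∈ G, IsCompact (closure {x | f x ≠ x}))
    (hTG : T ≤ G)
    (hdisp : ∀ K : Set X, IsCompact K → ∃ t ∈ T,
      ∀ p q : ℕ, 1 ≤ p → 1 ≤ q → p ≠ q →
        Disjoint ((t ^ p : X ≃ₜ X) '' K) ((t ^ q : X ≃ₜ X) '' K)) :
    CommutingZConjugates ↥G :=
  commutingZConjugates_of_displacement_general T G hG hTG hdisp
end

section
/- Let G be a group of compactly supported orientation-preserving homeomorphisms of the real line acting without a global fixed point. Then for every compact set K ⊂ ℝ there exists t ∈ G such that the sets t^p(K), p ≥ 1, are pairwise disjoint; consequently G has commuting ℤ-conjugates. -/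
/-! By orientation preservation and the absence of a global fixed point, the orbit of every point is
unbounded above (its supremum would be a global fixed point). Hence some `t ∈ G` pushes `K`
entirely to the right of itself, and then the sets `t ^ p '' K` are strictly increasing in `p`,
so pairwise disjoint. For a finitely generated `H`, take `K` to contain the supports of the
generators: `H` is supported in `K` and `t ^ p H t ^ (-p)` in the disjoint set `t ^ p '' K`, and
homeomorphisms with disjoint supports commute. -/

open Set

theorem StrictMono.iterate_lt_iterate_of_forall_lt_apply {α : Type*} [PartialOrder α] {f : α → α}
    (hf : StrictMono f) {K : Set α} (hK : ∀ x ∈ K, ∀ y ∈ K, x < f y) {p q : ℕ} (hpq : p < q)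
    {x y : α} (hx : x ∈ K) (hy : y ∈ K) : f^[p] x < f^[q] y := by
  obtain ⟨n, rfl⟩ := Nat.exists_eq_add_of_lt hpq
  have hy_le : y ≤ f^[n] y :=
    hf.monotone.monotone_iterate_of_le_map (hK y hy y hy).le (Nat.zero_le n)
  have hx_lt : x < f^[n + 1] y := by
    rw [Function.iterate_succ_apply']
    exact (hK x hx y hy).trans_le (hf.monotone hy_le)
  rw [Nat.add_assoc, Function.iterate_add_apply]
  exact (hf.iterate p) hx_lt

theorem StrictMono.disjoint_image_iterate {α : Type*} [PartialOrder α] {f : α → α}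
    (hf : StrictMono f) {K : Set α} (hK : ∀ x ∈ K, ∀ y ∈ K, x < f y) {p q : ℕ} (hpq : p ≠ q) :
    Disjoint (f^[p] '' K) (f^[q] '' K) := by
  wlog hlt : p < q generalizing p q
  · exact (this hpq.symm (hpq.lt_or_gt.resolve_left hlt)).symm
  rw [disjoint_left]
  rintro _ ⟨x, hx, rfl⟩ ⟨y, hy, hxy⟩
  exact (StrictMono.iterate_lt_iterate_of_forall_lt_apply hf hK hlt hx hy).ne' hxy

namespace Homeomorph

variable {X : Type*} [TopologicalSpace X]

theorem coe_pow_eq_iterate (f : X ≃ₜ X) (n : ℕ) : ⇑(f ^ n) = f^[n] := by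
  induction n with
  | zero => rfl
  | succ n ih => rw [pow_succ, Function.iterate_succ, ← ih]; rfl

theorem commute_of_forall_eq_or_eq {f g : X ≃ₜ X} (h : ∀ x, f x = x ∨ g x = x) :
    Commute f g :=
  toEquiv_injective (Equiv.Perm.Disjoint.commute h)

end Homeomorph

def homeoSupportedIn {X : Type*} [TopologicalSpace X] (K : Set X) : Subgroup (X ≃ₜ X) where
  carrier := {f | ∀ x ∉ K, f x = x}
  one_mem' _ _ := rfl
  mul_mem' {f g} hf hg x hx := by
    change f (g x) = x
    rw [hg x hx, hf x hx]
  inv_mem' {f} hf x hx := by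
    change f.symm x = x
    rw [f.symm_apply_eq, hf x hx]

section homeoSupportedIn

variable {X : Type*} [TopologicalSpace X]

theorem conj_mem_homeoSupportedIn {K : Set X} {f : X ≃ₜ X} (hf : f ∈ homeoSupportedIn K)
    (t : X ≃ₜ X) : t * f * t⁻¹ ∈ homeoSupportedIn (t '' K) := by
  intro x hx
  have hx' : t.symm x ∉ K := fun h => hx ⟨_, h, t.apply_symm_apply x⟩
  change t (f (t.symm x)) = x
  rw [hf _ hx', t.apply_symm_apply]

theorem commute_of_mem_homeoSupportedIn {A B : Set X} (hAB : Disjoint A B) {f g : X ≃ₜ X}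
    (hf : f ∈ homeoSupportedIn A) (hg : g ∈ homeoSupportedIn B) : Commute f g :=
  Homeomorph.commute_of_forall_eq_or_eq fun x =>
    (em (x ∈ A)).elim (fun hx => .inr (hg x (hAB.notMem_of_mem_left hx))) fun hx => .inl (hf x hx)

end homeoSupportedIn

section Order

variable {X : Type*} [TopologicalSpace X] [ConditionallyCompleteLinearOrder X] [OrderTopology X]
  {G : Subgroup (X ≃ₜ X)}

theorem Subgroup.exists_lt_apply_of_forall_exists_apply_ne (hmono : ∀ g ∈ G, Monotone g)
    (hnofix : ∀ x, ∃ g ∈ G, g x ≠ x) (a b : X) : ∃ g ∈ G, b < g a := by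
  by_contra! hbdd
  set orbit : Set X := {y | ∃ g ∈ G, g a = y}
  have hne : orbit.Nonempty := ⟨a, 1, G.one_mem, rfl⟩
  have hbdd : BddAbove orbit := ⟨b, by rintro _ ⟨g, hg, rfl⟩; exact hbdd g hg⟩
  have hle : ∀ g ∈ G, g (sSup orbit) ≤ sSup orbit := by
    intro g hg
    rw [(hmono g hg).map_csSup_of_continuousAt g.continuous.continuousAt hne hbdd]
    refine csSup_le (hne.image _) ?_
    rintro _ ⟨_, ⟨k, hk, rfl⟩, rfl⟩
    exact le_csSup hbdd ⟨g * k, G.mul_mem hg hk, rfl⟩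
  obtain ⟨g, hg, hmoved⟩ := hnofix (sSup orbit)
  refine hmoved (le_antisymm (hle g hg) ?_)
  calc sSup orbit = g (g⁻¹ (sSup orbit)) := (g.apply_symm_apply _).symm
    _ ≤ g (sSup orbit) := hmono g hg (hle g⁻¹ (G.inv_mem hg))

theorem Subgroup.exists_disjoint_image_pow (hmono : ∀ g ∈ G, Monotone g)
    (hnofix : ∀ x, ∃ g ∈ G, g x ≠ x) {K : Set X} (hbddBelow : BddBelow K)
    (hbddAbove : BddAbove K) :
    ∃ t ∈ G, ∀ p q : ℕ, p ≠ q → Disjoint ((t ^ p : X ≃ₜ X) '' K) ((t ^ q : X ≃ₜ X) '' K) := by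
  obtain ⟨a, ha⟩ := hbddBelow
  obtain ⟨b, hb⟩ := hbddAbove
  obtain ⟨t, ht, hba⟩ := G.exists_lt_apply_of_forall_exists_apply_ne hmono hnofix a b
  have htmono : StrictMono t := (hmono t ht).strictMono_of_injective t.injective
  have hK : ∀ x ∈ K, ∀ y ∈ K, x < t y := fun x hx y hy =>
    (hb hx).trans_lt (hba.trans_le (htmono.monotone (ha hy)))
  refine ⟨t, ht, fun p q hpq => ?_⟩
  simpa only [Homeomorph.coe_pow_eq_iterate] using htmono.disjoint_image_iterate hK hpq

end Order

/-- Let `G` be a group of compactly supported orientation-preserving homeomorphisms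
of the real line acting without a global fixed point.  Then every compact set
`K ⊆ ℝ` admits `t ∈ G` whose powers `t^p`, `p ≥ 1`, displace `K` to pairwise
disjoint sets; consequently `G` has commuting ℤ-conjugates. -/
theorem line_commutingZConjugates (G : Subgroup (ℝ ≃ₜ ℝ))
    (hsupp : ∀ g ∈ G, IsCompact (closure {x : ℝ | g x ≠ x}))
    (hmono : ∀ g ∈ G, Monotone (g : ℝ ≃ₜ ℝ))
    (hnofix : ∀ x : ℝ, ∃ g ∈ G, g x ≠ x) :
    (∀ K : Set ℝ, IsCompact K → ∃ t ∈ G,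
      ∀ p q : ℕ, 1 ≤ p → 1 ≤ q → p ≠ q →
        Disjoint ((t ^ p : ℝ ≃ₜ ℝ) '' K) ((t ^ q : ℝ ≃ₜ ℝ) '' K)) ∧
    CommutingZConjugates ↥G := by
  refine ⟨fun K hK => ?_, ?_⟩
  · obtain ⟨t, ht, hdisj⟩ := G.exists_disjoint_image_pow hmono hnofix hK.bddBelow hK.bddAbove
    exact ⟨t, ht, fun p q _ _ => hdisj p q⟩
  rintro H ⟨S, rfl⟩
  set K : Set ℝ := ⋃ g ∈ S, closure {x | (g : ℝ ≃ₜ ℝ) x ≠ x}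
  have hK : IsCompact K := S.finite_toSet.isCompact_biUnion fun g _ => hsupp g g.2
  have hH : Subgroup.closure (S : Set G) ≤ (homeoSupportedIn K).comap G.subtype :=
    (Subgroup.closure_le _).mpr fun g hg x hx => by_contra fun hgx =>
      hx (mem_biUnion hg (subset_closure hgx))
  obtain ⟨t, ht, hdisj⟩ := G.exists_disjoint_image_pow hmono hnofix hK.bddBelow hK.bddAbove
  refine ⟨⟨t, ht⟩, fun p hp h hh h' hh' => Commute.of_map G.subtype_injective ?_⟩
  have hKp : Disjoint K ((t ^ p : ℝ ≃ₜ ℝ) '' K) := by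
    simpa only [Homeomorph.coe_pow_eq_iterate t 0, Function.iterate_zero, image_id] using
      hdisj 0 p (by omega)
  simpa using commute_of_mem_homeoSupportedIn hKp (hH hh)
    (conj_mem_homeoSupportedIn (hH hh') (t ^ p))
end

section
/- Let R be a ring with identity. The direct limit general linear group GL(R) = ⋃_{n≥1} GL_n(R), under the upper-left-corner inclusions, has commuting cyclic conjugates: for every finitely generated subgroup H contained in the image of GL_n(R) (with n even, enlarging if necessary), the permutation matrix t implementing the involution swapping basis vectors e_i ↔ e_{n+i} for 1 ≤ i ≤ n (with sign chosen so that t ∈ GL_{2n}(R) has determinant 1, e.g. an even permutation) satisfies [H, tHt^{-1}] = 1 and t^2 = 1. -/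
/-! A finitely generated subgroup of `GL(R)` lies in the image of a single `GL_N(R)`. In
`GL_{2N}(R)` this image consists of the blocks `diag(A, 1)`, and conjugation by the block swap
`t = [[0, 1], [1, 0]]` carries them to `diag(1, B)`; blocks in complementary corners commute,
and `t² = 1`. -/

/-- The upper-left-corner inclusion of matrix monoids, `M ↦ diag(M, 1)`. -/
def cornerHom (R : Type*) [Ring R] (n : ℕ) :
    Matrix (Fin n) (Fin n) R →* Matrix (Fin (n + 1)) (Fin (n + 1)) R where
  toFun M := (Matrix.fromBlocks M 0 0 (1 : Matrix (Fin 1) (Fin 1) R)).submatrix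
    finSumFinEquiv.symm finSumFinEquiv.symm
  map_one' := by
    show (Matrix.fromBlocks (1 : Matrix (Fin n) (Fin n) R) 0 0
        (1 : Matrix (Fin 1) (Fin 1) R)).submatrix
      finSumFinEquiv.symm finSumFinEquiv.symm = 1
    rw [Matrix.fromBlocks_one]
    exact Matrix.submatrix_one_equiv finSumFinEquiv.symm
  map_mul' M N := by
    show (Matrix.fromBlocks (M * N) 0 0 (1 : Matrix (Fin 1) (Fin 1) R)).submatrix
        finSumFinEquiv.symm finSumFinEquiv.symm
      = (Matrix.fromBlocks M 0 0 (1 : Matrix (Fin 1) (Fin 1) R)).submatrix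
          finSumFinEquiv.symm finSumFinEquiv.symm *
        (Matrix.fromBlocks N 0 0 (1 : Matrix (Fin 1) (Fin 1) R)).submatrix
          finSumFinEquiv.symm finSumFinEquiv.symm
    rw [Matrix.submatrix_mul_equiv _ _ _ finSumFinEquiv.symm _]

    simp [Matrix.fromBlocks_multiply]

/-- The upper-left-corner inclusion `GL_n(R) → GL_{n+1}(R)`. -/
def cornerGL (R : Type*) [Ring R] (n : ℕ) :
    (Matrix (Fin n) (Fin n) R)ˣ →* (Matrix (Fin (n + 1)) (Fin (n + 1)) R)ˣ :=
  Units.map (cornerHom R n)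

open Matrix

theorem Subgroup.FG.exists_le_of_monotone {G ι : Type*} [Group G] [Preorder ι]
    [IsDirectedOrder ι] {K : ι → Subgroup G} (hK : Monotone K)
    (hcover : ∀ x, ∃ i, x ∈ K i) {H : Subgroup G} (hH : H.FG) : ∃ i, H ≤ K i := by
  classical
  obtain ⟨S, rfl⟩ := hH
  choose idx hidx using hcover
  have : Nonempty ι := ⟨idx 1⟩
  obtain ⟨i, hi⟩ := (S.image idx).exists_le
  exact ⟨i, (Subgroup.closure_le _).2 fun x hx ↦
    hK (hi _ (Finset.mem_image_of_mem _ hx)) (hidx x)⟩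

theorem finSumFinEquiv_symm_apply_eq_dite {m n : ℕ} (i : Fin (m + n)) :
    finSumFinEquiv.symm i =
      if h : (i : ℕ) < m then Sum.inl ⟨i, h⟩ else Sum.inr ⟨i - m, by omega⟩ := by
  split_ifs with h
  · rw [← finSumFinEquiv_symm_apply_castAdd]
    rfl
  · rw [← finSumFinEquiv_symm_apply_natAdd]
    congr 1
    ext
    simp only [Fin.natAdd, Fin.val_mk]
    omega

section Blocks

variable {R : Type*} [Semiring R] {m n : Type*} [Fintype m] [Fintype n] [DecidableEq m]
  [DecidableEq n]

theorem Matrix.fromBlocks_swap_mul_self :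
    fromBlocks (0 : Matrix n n R) 1 1 0 * fromBlocks 0 1 1 0 =
      (1 : Matrix (n ⊕ n) (n ⊕ n) R) := by
  simp [fromBlocks_multiply]

theorem Matrix.fromBlocks_swap_conj (A D : Matrix n n R) :
    fromBlocks 0 1 1 0 * fromBlocks A 0 0 D * fromBlocks 0 1 1 0 = fromBlocks D 0 0 A := by
  simp [fromBlocks_multiply]

theorem Matrix.commute_fromBlocks_one (A : Matrix m m R) (D : Matrix n n R) :
    Commute (fromBlocks A 0 0 1) (fromBlocks 1 0 0 D) := by
  simp [Commute, SemiconjBy, fromBlocks_multiply]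

variable (R m n)

def Matrix.fromBlocksOneHom : Matrix m m R →* Matrix (m ⊕ n) (m ⊕ n) R where
  toFun A := fromBlocks A 0 0 1
  map_one' := fromBlocks_one
  map_mul' A B := by simp [fromBlocks_multiply]

def Matrix.swapBlocksUnit : (Matrix (n ⊕ n) (n ⊕ n) R)ˣ where
  val := fromBlocks 0 1 1 0
  inv := fromBlocks 0 1 1 0
  val_inv := Matrix.fromBlocks_swap_mul_self
  inv_val := Matrix.fromBlocks_swap_mul_self

theorem Matrix.swapBlocksUnit_sq : swapBlocksUnit R n ^ 2 = 1 :=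
  Units.ext (by rw [Units.val_pow_eq_pow_val, sq]; exact fromBlocks_swap_mul_self)

theorem Matrix.commute_fromBlocksOneHom_swapBlocksUnit_conj (a b : (Matrix n n R)ˣ) :
    Commute (Units.map (fromBlocksOneHom R n n) a)
      (swapBlocksUnit R n * Units.map (fromBlocksOneHom R n n) b * (swapBlocksUnit R n)⁻¹) := by
  refine Units.ext ?_
  change Commute (fromBlocks a.val 0 0 1)
    (fromBlocks 0 1 1 0 * fromBlocks b.val 0 0 1 * fromBlocks 0 1 1 0)
  rw [fromBlocks_swap_conj]
  exact commute_fromBlocks_one _ _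

end Blocks

section CornerEmbedding

variable (R : Type*)

def blockHom [Semiring R] (N k : ℕ) :
    Matrix (Fin N) (Fin N) R →* Matrix (Fin (N + k)) (Fin (N + k)) R :=
  (reindexRingEquiv R finSumFinEquiv).toMonoidHom.comp (fromBlocksOneHom R (Fin N) (Fin k))

theorem blockHom_apply_apply [Semiring R] {N k : ℕ} (M : Matrix (Fin N) (Fin N) R)
    (i j : Fin (N + k)) : blockHom R N k M i j =
      if hi : (i : ℕ) < N then if hj : (j : ℕ) < N then M ⟨i, hi⟩ ⟨j, hj⟩ else 0
      else if i = j then 1 else 0 := by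
  change fromBlocks M 0 0 1 (finSumFinEquiv.symm i) (finSumFinEquiv.symm j) = _
  rw [finSumFinEquiv_symm_apply_eq_dite, finSumFinEquiv_symm_apply_eq_dite]
  split_ifs <;> simp_all [one_apply, Fin.ext_iff] <;> omega

theorem blockHom_zero [Semiring R] (N : ℕ) : blockHom R N 0 = MonoidHom.id _ := by
  ext M i j
  rw [blockHom_apply_apply, dif_pos (show (i : ℕ) < N from i.isLt),
    dif_pos (show (j : ℕ) < N from j.isLt)]
  rfl

theorem cornerHom_eq_blockHom [Ring R] (n : ℕ) : cornerHom R n = blockHom R n 1 :=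
  rfl

theorem blockHom_succ [Ring R] (N k : ℕ) :
    blockHom R N (k + 1) = (cornerHom R (N + k)).comp (blockHom R N k) := by
  rw [cornerHom_eq_blockHom]
  ext M i j
  simp only [MonoidHom.comp_apply, blockHom_apply_apply]
  split_ifs <;> simp_all [Fin.ext_iff] <;> omega

def blockGL [Semiring R] (N k : ℕ) :
    (Matrix (Fin N) (Fin N) R)ˣ →* (Matrix (Fin (N + k)) (Fin (N + k)) R)ˣ :=
  Units.map (blockHom R N k)

theorem comp_blockGL_eq [Ring R] {Γ : Type*} [Group Γ]
    (g : ∀ n : ℕ, (Matrix (Fin n) (Fin n) R)ˣ →* Γ)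
    (hcompat : ∀ n, (g (n + 1)).comp (cornerGL R n) = g n) (N k : ℕ) :
    (g (N + k)).comp (blockGL R N k) = g N := by
  induction k with
  | zero => rw [blockGL, blockHom_zero, Units.map_id]; rfl
  | succ k ih =>
    rw [blockGL, blockHom_succ, Units.map_comp, ← MonoidHom.comp_assoc]
    exact (congrArg (MonoidHom.comp · _) (hcompat (N + k))).trans ih

theorem monotone_range_of_comp_cornerGL [Ring R] {Γ : Type*} [Group Γ]
    (g : ∀ n : ℕ, (Matrix (Fin n) (Fin n) R)ˣ →* Γ)
    (hcompat : ∀ n, (g (n + 1)).comp (cornerGL R n) = g n) :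
    Monotone fun n ↦ (g n).range :=
  monotone_nat_of_le_succ fun n ↦ by
    rw [← hcompat n, MonoidHom.range_comp]
    exact Subgroup.map_le_range _ _

def swapGL [Semiring R] (N : ℕ) : (Matrix (Fin (N + N)) (Fin (N + N)) R)ˣ :=
  Units.map (reindexRingEquiv R finSumFinEquiv).toMonoidHom (swapBlocksUnit R (Fin N))

theorem swapGL_sq [Semiring R] (N : ℕ) : swapGL R N ^ 2 = 1 := by
  rw [swapGL, ← map_pow, swapBlocksUnit_sq, map_one]

theorem commute_blockGL_swapGL_conj [Semiring R] (N : ℕ)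
    (a b : (Matrix (Fin N) (Fin N) R)ˣ) :
    Commute (blockGL R N N a) (swapGL R N * blockGL R N N b * (swapGL R N)⁻¹) := by
  have := (commute_fromBlocksOneHom_swapBlocksUnit_conj R (Fin N) a b).map
    (Units.map (reindexRingEquiv R finSumFinEquiv).toMonoidHom)
  rwa [map_mul, map_mul, map_inv] at this

end CornerEmbedding

theorem GL_direct_limit_commutingCyclicConjugates_general
    (R : Type*) [Ring R] (Γ : Type*) [Group Γ]
    (g : ∀ n : ℕ, (Matrix (Fin n) (Fin n) R)ˣ →* Γ)
    (hcompat : ∀ n, (g (n + 1)).comp (cornerGL R n) = g n)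
    (hunion : ∀ x : Γ, ∃ n, x ∈ (g n).range) :
    ∀ H : Subgroup Γ, H.FG → ∃ t : Γ, t ^ 2 = 1 ∧
      ∀ h ∈ H, ∀ h' ∈ H, Commute h (t * h' * t⁻¹) := by
  intro H hH
  obtain ⟨N, hN⟩ :=
    hH.exists_le_of_monotone (monotone_range_of_comp_cornerGL R g hcompat) hunion
  refine ⟨g (N + N) (swapGL R N), by rw [← map_pow, swapGL_sq, map_one], ?_⟩
  rintro _ hh _ hh'
  obtain ⟨a, rfl⟩ := hN hh
  obtain ⟨b, rfl⟩ := hN hh'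
  rw [← comp_blockGL_eq R g hcompat N N]
  simpa only [MonoidHom.comp_apply, map_mul, map_inv] using
    (commute_blockGL_swapGL_conj R N a b).map (g (N + N))

/-- Let `R` be a ring with identity and let `Γ` be the direct limit general linear
group `GL(R) = ⋃_{n ≥ 1} GL_n(R)` along the upper-left-corner inclusions, presented
by compatible injective homomorphisms `g n : GL_n(R) → Γ` whose ranges cover `Γ`.
Then `Γ` has commuting cyclic conjugates: every finitely generated subgroup `H`
admits `t ∈ Γ` with `t² = 1` and `[H, t H t⁻¹] = 1`. -/
theorem GL_direct_limit_commutingCyclicConjugates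
    (R : Type*) [Ring R] (Γ : Type*) [Group Γ]
    (g : ∀ n : ℕ, (Matrix (Fin n) (Fin n) R)ˣ →* Γ)
    (hinj : ∀ n, Function.Injective (g n))
    (hcompat : ∀ n, (g (n + 1)).comp (cornerGL R n) = g n)
    (hunion : ∀ x : Γ, ∃ n, x ∈ (g n).range) :
    ∀ H : Subgroup Γ, H.FG → ∃ t : Γ, t ^ 2 = 1 ∧
      ∀ h ∈ H, ∀ h' ∈ H, Commute h (t * h' * t⁻¹) :=
  GL_direct_limit_commutingCyclicConjugates_general R Γ g hcompat hunion
end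

section
/- Let H be a group, A a group, X a transitive A-set, and f : H ≀_X A → Γ a group homomorphism to some group Γ such that f restricted to the factor H at some coordinate x₀ ∈ X is injective, and f([H_x, H_{x₀}]) = 1 for all x ≠ x₀. Then K := ker(f) ∩ ⊕_{x ∈ X} H is abelian. -/
/-- The direct sum `⊕_{x ∈ X} H`: the subgroup of `X → H` consisting of functions
with finite support. -/
def finSupp (X H : Type*) [Group H] : Subgroup (X → H) where
  carrier := {b | (Function.mulSupport b).Finite}
  one_mem' := by simp [Function.mulSupport_one]
  mul_mem' := by
    intro a b ha hb
    exact (ha.union hb).subset (Function.mulSupport_mul a b)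
  inv_mem' := by
    intro a ha
    refine ha.subset fun x hx => ?_
    simpa [Function.mem_mulSupport] using hx
  
/-- The copy of `H` at coordinate `x`, i.e. the element of `⊕_{x ∈ X} H` supported
at `x` with value `h`. -/
def coordSingle {X H : Type*} [Group H] [DecidableEq X] (x : X) (h : H) :
    ↥(finSupp X H) :=
  ⟨Pi.mulSingle x h, by
    refine (Set.finite_singleton x).subset fun y hy => ?_
    simp only [Function.mem_mulSupport] at hy
    by_contra hyx
    simp only [Set.mem_singleton_iff] at hyx
    exact hy (Pi.mulSingle_eq_of_ne (M := fun _ : X => H) hyx h)⟩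

/-- The shift of a finitely supported function by a permutation `σ` of the index
set: `(σ • b) x = b (σ⁻¹ x)`.  This is how the acting group of a permutational
wreath product acts on the base. -/
def shift {X H : Type*} [Group H] (σ : Equiv.Perm X) (b : ↥(finSupp X H)) :
    ↥(finSupp X H) :=
  ⟨fun x => (b : X → H) (σ⁻¹ x), by
    refine (b.2.image σ).subset fun x hx => ?_
    exact ⟨σ⁻¹ x, hx, by simp⟩⟩

/-! Every coordinate `g x` of an element `g` of `K` is central in `H`. At `x₀`: splitting `g` as
`H_{x₀}`-part times the rest, `f g = 1` makes `f` of the `H_{x₀}`-part the inverse of `f` of the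
rest, which lies in the image of `⊕_{x ≠ x₀} H_x` and so commutes with `f(H_{x₀})`; injectivity of
`f` on `H_{x₀}` then gives centrality. Transitivity moves any coordinate to `x₀`, since shifting
`g` by `a` conjugates `f g` by `u a` and so preserves `K`. -/

namespace finSupp

variable {X H : Type*} [Group H]

def erase [DecidableEq X] (y : X) (b : ↥(finSupp X H)) : ↥(finSupp X H) :=
  ⟨Function.update (b : X → H) y 1,
    b.2.subset ((Function.mulSupport_update_one _ _).trans_subset Set.sdiff_subset)⟩

@[simp]
theorem coe_erase [DecidableEq X] (y : X) (b : ↥(finSupp X H)) :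
    (erase y b : X → H) = Function.update (b : X → H) y 1 :=
  rfl

@[simp]
theorem coe_coordSingle [DecidableEq X] (x : X) (h : H) :
    (coordSingle x h : X → H) = Pi.mulSingle x h :=
  rfl

@[simp]
theorem shift_apply (σ : Equiv.Perm X) (b : ↥(finSupp X H)) (x : X) :
    (shift σ b : X → H) x = (b : X → H) (σ⁻¹ x) :=
  rfl

variable [DecidableEq X]

theorem coordSingle_mul (x : X) (h₁ h₂ : H) :
    coordSingle x (h₁ * h₂) = coordSingle x h₁ * coordSingle x h₂ :=
  Subtype.ext (Pi.mulSingle_mul (f := fun _ : X => H) x h₁ h₂)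

theorem coordSingle_mul_erase (y : X) (b : ↥(finSupp X H)) :
    coordSingle y ((b : X → H) y) * erase y b = b := by
  ext x
  rcases eq_or_ne x y with rfl | hxy
  · simp
  · simp [Function.update_of_ne hxy, Pi.mulSingle_eq_of_ne hxy]

theorem mem_closure_coordSingle {S : Set X} (b : ↥(finSupp X H))
    (hb : Function.mulSupport (b : X → H) ⊆ S) :
    b ∈ Subgroup.closure {g | ∃ x ∈ S, ∃ h, coordSingle x h = g} := by
  suffices ∀ T : Finset X, ↑T ⊆ S → ∀ b : ↥(finSupp X H),
      Function.mulSupport (b : X → H) ⊆ ↑T →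
        b ∈ Subgroup.closure {g | ∃ x ∈ S, ∃ h, coordSingle x h = g} by
    have hfin : (Function.mulSupport (b : X → H)).Finite := b.2
    exact this hfin.toFinset (by simpa using hb) b (by simp)
  intro T
  induction T using Finset.induction_on with
  | empty =>
    intro _ b hb
    rw [Finset.coe_empty, Set.subset_empty_iff, Function.mulSupport_eq_empty_iff] at hb
    have : b = 1 := Subtype.ext hb
    exact this ▸ Subgroup.one_mem _
  | insert y T _ ih =>
    intro hTS b hb
    rw [Finset.coe_insert, Set.insert_subset_iff] at hTS
    rw [← coordSingle_mul_erase y b]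
    refine Subgroup.mul_mem _ (Subgroup.subset_closure ⟨y, hTS.1, _, rfl⟩) (ih hTS.2 _ ?_)
    rw [coe_erase, Function.mulSupport_update_one]
    intro x hx
    exact (Finset.mem_insert.1 (hb hx.1)).resolve_left hx.2

variable {Γ : Type*} [Group Γ]

theorem commute_map_of_apply_eq_one (f : ↥(finSupp X H) →* Γ) {x₀ : X} {c : Γ}
    (hc : ∀ x ≠ x₀, ∀ h : H, Commute (f (coordSingle x h)) c)
    {b : ↥(finSupp X H)} (hb : (b : X → H) x₀ = 1) : Commute (f b) c := by
  have hsupp : Function.mulSupport (b : X → H) ⊆ {x₀}ᶜ := fun x hx hxx₀ => hx (hxx₀ ▸ hb)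
  refine Subgroup.closure_induction (p := fun g _ => Commute (f g) c) ?_ ?_ ?_ ?_
    (mem_closure_coordSingle b hsupp)
  · rintro _ ⟨x, hx, h, rfl⟩
    exact hc x hx h
  · simp
  · intro _ _ _ _ h₁ h₂
    simpa using h₁.mul_left h₂
  · intro _ _ h
    simpa using h.inv_left

theorem commute_apply_of_map_eq_one (f : ↥(finSupp X H) →* Γ) (x₀ : X)
    (hinj : Function.Injective fun h => f (coordSingle x₀ h))
    (hcomm : ∀ x ≠ x₀, ∀ h h' : H, Commute (f (coordSingle x h)) (f (coordSingle x₀ h')))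
    {g : ↥(finSupp X H)} (hg : f g = 1) (h : H) : Commute ((g : X → H) x₀) h := by
  have hinv : f (coordSingle x₀ ((g : X → H) x₀)) = (f (erase x₀ g))⁻¹ := by
    rw [eq_inv_iff_mul_eq_one, ← map_mul, coordSingle_mul_erase, hg]
  have hrest : Commute (f (erase x₀ g)) (f (coordSingle x₀ h)) :=
    commute_map_of_apply_eq_one f (fun x hx k => hcomm x hx k h) (by simp)
  apply hinj
  simp only [coordSingle_mul, map_mul]
  exact hinv ▸ hrest.inv_left

end finSupp

open finSupp in
/-- Let `H ≀_X A → Γ` be a homomorphism from a permutational wreath product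
(presented by its restriction `f` to the base `⊕_{x ∈ X} H`, the map `u` on the
acting group `A`, and the equivariance relation), with `X` a transitive `A`-set.
If `f` is injective on the copy of `H` at a coordinate `x₀` and kills the
commutators `[H_x, H_{x₀}]` for all `x ≠ x₀`, then `K = ker(f) ∩ ⊕_{x ∈ X} H`
is abelian. -/
theorem wreath_kernel_abelian {X H A Γ : Type*} [Group H] [Group A] [Group Γ]
    [DecidableEq X]
    (σ : A →* Equiv.Perm X) (htrans : ∀ x y : X, ∃ a : A, σ a x = y)
    (f : ↥(finSupp X H) →* Γ) (u : A →* Γ)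
    (hequiv : ∀ (a : A) (b : ↥(finSupp X H)), f (shift (σ a) b) = u a * f b * (u a)⁻¹)
    (x₀ : X)
    (hinj : ∀ h₁ h₂ : H, f (coordSingle x₀ h₁) = f (coordSingle x₀ h₂) → h₁ = h₂)
    (hcomm : ∀ x : X, x ≠ x₀ → ∀ h h' : H,
      Commute (f (coordSingle x h)) (f (coordSingle x₀ h'))) :
    ∀ g₁ g₂ : ↥(finSupp X H), f g₁ = 1 → f g₂ = 1 → Commute g₁ g₂ := by
  intro g₁ g₂ hg₁ _
  have hcentral : ∀ x h, Commute ((g₁ : X → H) x) h := by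
    intro x h
    obtain ⟨a, rfl⟩ := htrans x x₀
    have hker : f (shift (σ a) g₁) = 1 := by rw [hequiv, hg₁, mul_one, mul_inv_cancel]
    simpa using commute_apply_of_map_eq_one f _ hinj hcomm hker h
  exact Subtype.ext (Pi.commute_iff.2 fun x => hcentral x _).eq
end

section
/- Let Γ be a group satisfying: for every finitely generated subgroup H ≤ Γ there exist a group A, an A-set X which is infinite and transitive, and a homomorphism f : H ≀_X A → Γ restricting to the inclusion of H on the factor at some coordinate x₀. Then Γ has commuting cyclic conjugates. Specifically, choosing a ∈ A with a·x₀ ≠ x₀, setting t = f(a) and n ∈ ℕ_{≥2} ∪ {∞} minimal with a^n·x₀ = x₀, one has [H, t^p H t^{-p}] = 1 for 1 ≤ p < n and [H, t^n] = 1. -/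
/-
Transport everything through `f`: conjugating the copy of `H` at `x₀` by `u b` gives the copy
at `σ b x₀`. Copies at distinct coordinates commute in the base group, which yields the first
claim; when `σ (a ^ n)` fixes `x₀`, conjugation by `(u a) ^ n` fixes `H` pointwise, which is the
second.
-/

section CoordSingle

variable {X K : Type*} [Group K] [DecidableEq X]

theorem shift_coordSingle (τ : Equiv.Perm X) (x : X) (k : K) :
    shift τ (coordSingle x k) = coordSingle (τ x) k := by
  apply Subtype.ext
  funext y
  show (Pi.mulSingle x k : X → K) (τ⁻¹ y) = (Pi.mulSingle (τ x) k : X → K) y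
  simp only [Pi.mulSingle_apply, Equiv.Perm.inv_eq_iff_eq]

theorem coordSingle_commute {x y : X} (hxy : x ≠ y) (k k' : K) :
    Commute (coordSingle x k) (coordSingle y k') :=
  Subtype.ext (Pi.mulSingle_commute (f := fun _ : X => K) hxy k k')

end CoordSingle

theorem conj_eq_map_coordSingle {X A Γ : Type*} [Group A] [Group Γ] [DecidableEq X]
    {σ : A →* Equiv.Perm X} {H : Subgroup Γ} {f : ↥(finSupp X ↥H) →* Γ} {u : A →* Γ} {x₀ : X}
    (hequiv : ∀ (a : A) (b : ↥(finSupp X ↥H)), f (shift (σ a) b) = u a * f b * (u a)⁻¹)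
    (hincl : ∀ h : ↥H, f (coordSingle x₀ h) = (h : Γ)) (b : A) (h : ↥H) :
    u b * (h : Γ) * (u b)⁻¹ = f (coordSingle (σ b x₀) h) := by
  rw [← hincl h, ← hequiv, shift_coordSingle]

theorem commutingCyclicConjugates_of_wreath_general {X A Γ : Type*} [Group A] [Group Γ]
    [DecidableEq X]
    (σ : A →* Equiv.Perm X)
    (H : Subgroup Γ)
    (f : ↥(finSupp X ↥H) →* Γ) (u : A →* Γ)
    (hequiv : ∀ (a : A) (b : ↥(finSupp X ↥H)),
      f (shift (σ a) b) = u a * f b * (u a)⁻¹)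
    (x₀ : X) (hincl : ∀ h : ↥H, f (coordSingle x₀ h) = (h : Γ))
    (a : A) :
    (∀ p : ℕ, 1 ≤ p → σ (a ^ p) x₀ ≠ x₀ →
      ∀ h ∈ H, ∀ h' ∈ H, Commute h ((u a) ^ p * h' * ((u a) ^ p)⁻¹)) ∧
    (∀ n : ℕ, σ (a ^ n) x₀ = x₀ → ∀ h ∈ H, Commute h ((u a) ^ n)) := by
  have hconj := conj_eq_map_coordSingle hequiv hincl
  constructor
  · intro p _ hp h hh h' hh'
    have hcomm := (coordSingle_commute (Ne.symm hp) ⟨h, hh⟩ ⟨h', hh'⟩).map f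
    rwa [hincl, ← hconj, map_pow] at hcomm
  · intro n hn h hh
    have hfix : u a ^ n * h * (u a ^ n)⁻¹ = h := by
      rw [← map_pow]
      exact (hconj (a ^ n) ⟨h, hh⟩).trans (by rw [hn, hincl])
    exact (mul_inv_eq_iff_eq_mul.mp hfix).symm

/-- Suppose that for a finitely generated subgroup `H ≤ Γ` there are a group `A`,
an infinite transitive `A`-set `X`, and a homomorphism `f : H ≀_X A → Γ`
(presented by its restriction `f` to the base `⊕_{x ∈ X} H`, the map `u` on the
acting group, and the equivariance relation) restricting to the inclusion of `H`
at the coordinate `x₀`.  Then the commuting-cyclic-conjugates witnesses for `H`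
are obtained as follows: for any `a ∈ A` with `a · x₀ ≠ x₀`, setting `t = u a`,
one has `[H, t^p H t^{-p}] = 1` whenever `a^p · x₀ ≠ x₀` (in particular for
`1 ≤ p < n` with `n` minimal such that `a^n · x₀ = x₀`), and `[H, t^n] = 1`
whenever `a^n · x₀ = x₀`.  Hence `Γ` has commuting cyclic conjugates. -/
theorem commutingCyclicConjugates_of_wreath {X A Γ : Type*} [Group A] [Group Γ]
    [DecidableEq X] [Infinite X]
    (σ : A →* Equiv.Perm X) (htrans : ∀ x y : X, ∃ a : A, σ a x = y)
    (H : Subgroup Γ) (hH : H.FG)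
    (f : ↥(finSupp X ↥H) →* Γ) (u : A →* Γ)
    (hequiv : ∀ (a : A) (b : ↥(finSupp X ↥H)),
      f (shift (σ a) b) = u a * f b * (u a)⁻¹)
    (x₀ : X) (hincl : ∀ h : ↥H, f (coordSingle x₀ h) = (h : Γ))
    (a : A) (ha : σ a x₀ ≠ x₀) :
    (∀ p : ℕ, 1 ≤ p → σ (a ^ p) x₀ ≠ x₀ →
      ∀ h ∈ H, ∀ h' ∈ H, Commute h ((u a) ^ p * h' * ((u a) ^ p)⁻¹)) ∧
    (∀ n : ℕ, σ (a ^ n) x₀ = x₀ → ∀ h ∈ H, Commute h ((u a) ^ n)) :=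
  commutingCyclicConjugates_of_wreath_general σ H f u hequiv x₀ hincl a
end

section
/- Let r : Γ → Λ be a group retraction (i.e. there is a homomorphism ι : Λ → Γ with r ∘ ι = id_Λ), let E be a Banach Λ-module, and let n ≥ 1. Then the n-th vanishing modulus satisfies ‖H^n_b(Γ; r*E)‖ ≥ ‖H^n_b(Λ; E)‖. -/
open scoped BigOperators ENNReal NNReal

section

variable {Γ E : Type*} [Group Γ] [NormedAddCommGroup E] [NormedSpace ℝ E]

/-- The simplicial coboundary operator on (homogeneous) cochains:
`(δf)(g₀, …, g_{n+1}) = Σ_i (-1)^i f(g₀, …, ĝ_i, …, g_{n+1})`. -/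
def coboundary (n : ℕ) (f : (Fin (n + 1) → Γ) → E) : (Fin (n + 2) → Γ) → E :=
  fun x => ∑ i : Fin (n + 2), ((-1 : ℝ) ^ (i : ℕ)) • f (x ∘ i.succAbove)

/-- A cochain is `Γ`-invariant (for the isometric linear action `ρ`) if
`f(γg₀, …, γg_k) = ρ(γ)(f(g₀, …, g_k))`. -/
def IsInvariantCochain (ρ : Γ →* E ≃ₗᵢ[ℝ] E) {k : ℕ} (f : (Fin k → Γ) → E) : Prop :=
  ∀ (γ : Γ) (x : Fin k → Γ), f (fun i => γ * x i) = ρ γ (f x)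

/-- A cochain is bounded if its values have uniformly bounded norm. -/
def IsBoundedCochain {k : ℕ} (f : (Fin k → Γ) → E) : Prop :=
  ∃ C : ℝ, ∀ x, ‖f x‖ ≤ C

/-- The vanishing modulus `‖H^{n+1}_b(Γ; E)‖` of the bounded cohomology of `Γ` in
degree `n + 1` with coefficients in `E` (acted on by `ρ`): the least `K ∈ [0, ∞]`
such that every invariant bounded `(n+1)`-cocycle `z` has an invariant bounded
primitive `b` with `δb = z` and `‖b‖_∞ ≤ K · ‖z‖_∞` (with `inf ∅ = ∞`). -/
noncomputable def vanishingModulus (ρ : Γ →* E ≃ₗᵢ[ℝ] E) (n : ℕ) : ℝ≥0∞ :=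
  sInf {K : ℝ≥0∞ | ∀ z : (Fin (n + 2) → Γ) → E,
    IsInvariantCochain ρ z → IsBoundedCochain z → coboundary (n + 1) z = 0 →
    ∃ b : (Fin (n + 1) → Γ) → E,
      IsInvariantCochain ρ b ∧ IsBoundedCochain b ∧ coboundary n b = z ∧
      ∀ x, (‖b x‖₊ : ℝ≥0∞) ≤ K * ⨆ y, (‖z y‖₊ : ℝ≥0∞)}

end

/-!
Pull an invariant bounded cocycle `z` on `Λ` back along `r` to a cocycle on `Γ` with coefficients
in `r*E`, take a primitive `b` there, and push it back along `ι`: since `r ∘ ι = id`, the cochain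
`b ∘ ι` is a `Λ`-invariant primitive of `z`, and neither pulling back nor pushing forward
increases sup norms.
-/

section Pullback

variable {Γ Λ E : Type*} {k : ℕ}

def pullbackCochain (f : Γ → Λ) (c : (Fin k → Λ) → E) : (Fin k → Γ) → E :=
  fun x => c (f ∘ x)

theorem pullbackCochain_pullbackCochain {Δ : Type*} (f : Γ → Λ) (g : Λ → Δ)
    (c : (Fin k → Δ) → E) :
    pullbackCochain f (pullbackCochain g c) = pullbackCochain (g ∘ f) c :=
  rfl

theorem pullbackCochain_id (c : (Fin k → Γ) → E) : pullbackCochain id c = c :=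
  rfl

theorem iSup_nnnorm_pullbackCochain_le [NNNorm E] (f : Γ → Λ) (c : (Fin k → Λ) → E) :
    ⨆ x, (‖pullbackCochain f c x‖₊ : ℝ≥0∞) ≤ ⨆ y, (‖c y‖₊ : ℝ≥0∞) :=
  iSup_le fun x => le_iSup (fun y => (‖c y‖₊ : ℝ≥0∞)) (f ∘ x)

variable [NormedAddCommGroup E]

theorem IsBoundedCochain.pullbackCochain {c : (Fin k → Λ) → E} (hc : IsBoundedCochain c)
    (f : Γ → Λ) : IsBoundedCochain (pullbackCochain f c) :=
  let ⟨C, hC⟩ := hc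
  ⟨C, fun x => hC (f ∘ x)⟩

variable [NormedSpace ℝ E]

theorem coboundary_pullbackCochain (f : Γ → Λ) (n : ℕ) (c : (Fin (n + 1) → Λ) → E) :
    coboundary n (pullbackCochain f c) = pullbackCochain f (coboundary n c) :=
  rfl

theorem IsInvariantCochain.pullbackCochain [Group Γ] [Group Λ] {ρ : Λ →* E ≃ₗᵢ[ℝ] E}
    {c : (Fin k → Λ) → E} (hc : IsInvariantCochain ρ c) (f : Γ →* Λ) :
    IsInvariantCochain (ρ.comp f) (pullbackCochain f c) := by
  intro γ x
  show c (f ∘ fun i => γ * x i) = ρ (f γ) (c (f ∘ x))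
  simpa only [Function.comp_def, map_mul] using hc (f γ) (f ∘ x)

end Pullback

theorem vanishingModulus_le_of_retraction_general {Γ Λ E : Type*} [Group Γ] [Group Λ]
    [NormedAddCommGroup E] [NormedSpace ℝ E]
    (r : Γ →* Λ) (ι : Λ →* Γ) (hretr : r.comp ι = MonoidHom.id Λ)
    (ρ : Λ →* E ≃ₗᵢ[ℝ] E) (n : ℕ) :
    vanishingModulus ρ n ≤ vanishingModulus (ρ.comp r) n := by
  refine sInf_le_sInf fun K hK z hzi hzb hzc => ?_
  have hz_cocycle : coboundary (n + 1) (pullbackCochain r z) = 0 := by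
    rw [coboundary_pullbackCochain, hzc]
    rfl
  obtain ⟨b, hbi, hbb, hbz, hbK⟩ :=
    hK (pullbackCochain r z) (hzi.pullbackCochain r) (hzb.pullbackCochain r) hz_cocycle
  have hri : (r : Γ → Λ) ∘ ι = id := congrArg DFunLike.coe hretr
  refine ⟨pullbackCochain ι b, ?_, hbb.pullbackCochain ι, ?_,
    fun x => (hbK (ι ∘ x)).trans ?_⟩
  · simpa only [MonoidHom.comp_assoc, hretr, MonoidHom.comp_id] using hbi.pullbackCochain ι
  · rw [coboundary_pullbackCochain, hbz, pullbackCochain_pullbackCochain, hri,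
      pullbackCochain_id]
  · gcongr
    exact iSup_nnnorm_pullbackCochain_le r z

/-- If `r : Γ → Λ` is a retraction of groups (with section `ι`) and `E` is a Banach
`Λ`-module, then the vanishing moduli satisfy
`‖H^{n+1}_b(Γ; r*E)‖ ≥ ‖H^{n+1}_b(Λ; E)‖` (degree `n + 1 ≥ 1`). -/
theorem vanishingModulus_le_of_retraction {Γ Λ E : Type*} [Group Γ] [Group Λ]
    [NormedAddCommGroup E] [NormedSpace ℝ E] [CompleteSpace E]
    (r : Γ →* Λ) (ι : Λ →* Γ) (hretr : r.comp ι = MonoidHom.id Λ)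
    (ρ : Λ →* E ≃ₗᵢ[ℝ] E) (n : ℕ) :
    vanishingModulus ρ n ≤ vanishingModulus (ρ.comp r) n :=
  vanishingModulus_le_of_retraction_general r ι hretr ρ n
end

section
/- Let Γ be a countable group acting on a countable set X, let Y be a standard Borel probability space whose measure does not concentrate on a point, and consider the generalised Bernoulli shift action of Γ on Y^X. If the action of Γ on Y^X is ergodic, then it is highly ergodic, i.e. the diagonal action on (Y^X)^n is ergodic for every n ≥ 1. -/
/-!
Ergodicity of the Bernoulli shift forces every `Γ`-orbit on `X` to be infinite: otherwise the
cylinder set asking a finite orbit to lie in a set of measure strictly between `0` and `1`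
would be invariant of intermediate measure. The diagonal action on `(Y^X)^n` is the Bernoulli
shift over `n` disjoint copies of `X`, whose orbits are again infinite. For a Bernoulli shift
with infinite orbits, approximate an invariant set `s` by a cylinder `C` over a finite set `J`;
by B. H. Neumann's lemma some `γ` moves `J` off itself, so `C` and `γ • C` are independent and
both approximate `s`, whence `μ s = (μ s)²`.
-/

open MeasureTheory

/-- A (non-singular) action of a group `G` on a measure space is *ergodic* if every
measurable invariant set has measure `0` or full measure (here for a probability
measure, measure `1`). -/
def IsErgodicAction {G α : Type*} [Group G] [MeasurableSpace α]
    (act : G → α → α) (μ : Measure α) : Prop :=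
  ∀ s : Set α, MeasurableSet s → (∀ g : G, act g ⁻¹' s = s) → μ s = 0 ∨ μ s = 1

open Set MulAction ProbabilityTheory
open scoped symmDiff Pointwise

theorem IsErgodicAction.of_semiconj {G α β : Type*} [Group G] [MeasurableSpace α]
    [MeasurableSpace β] {a : G → α → α} {b : G → β → β} {μ : Measure α} {ν : Measure β}
    {f : α → β} (hf : MeasurePreserving f μ ν) (hab : ∀ g, f ∘ a g = b g ∘ f)
    (ha : IsErgodicAction a μ) : IsErgodicAction b ν := by
  intro s hs hinv
  have hpre : ∀ g, a g ⁻¹' (f ⁻¹' s) = f ⁻¹' s := fun g => by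
    rw [← preimage_comp, hab, preimage_comp, hinv]
  rw [← hf.measure_preimage hs.nullMeasurableSet]
  exact ha _ (hf.measurable hs) hpre

theorem exists_measure_pos_lt_one {Y : Type*} [MeasurableSpace Y]
    [MeasurableSpace.CountablySeparated Y] (ν : Measure Y) [IsProbabilityMeasure ν]
    (hν : ∀ y : Y, ν {y} ≠ 1) : ∃ t : Set Y, MeasurableSet t ∧ 0 < ν t ∧ ν t < 1 := by
  by_contra! h
  have := MeasurableSpace.measurableSingletonClass_of_countablySeparated (α := Y)
  have : Nonempty Y := nonempty_of_isProbabilityMeasure ν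
  have h01 : ∀ U, MeasurableSet U → U ∈ ae ν ∨ Uᶜ ∈ ae ν := fun U hU => by
    rcases eq_zero_or_pos (ν U) with h0 | hpos
    · exact Or.inr (mem_ae_iff.2 (by rwa [compl_compl]))
    · exact Or.inl (mem_ae_iff.2 ((prob_compl_eq_zero_iff hU).2
        (le_antisymm prob_le_one (h U hU hpos))))
  obtain ⟨y, hy⟩ := Filter.exists_singleton_mem_of_forall_separating MeasurableSet h01
  exact hν y ((prob_compl_eq_zero_iff (measurableSet_singleton y)).1 (mem_ae_iff.1 hy))

theorem measure_eq_zero_or_one_of_forall_approx_indep {Ω : Type*} [MeasurableSpace Ω]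
    {P : Measure Ω} [IsProbabilityMeasure P] {s : Set Ω} (hs : MeasurableSet s)
    (h : ∀ ε > 0, ∃ C D : Set Ω, MeasurableSet C ∧ MeasurableSet D ∧
      P.real (s ∆ C) < ε ∧ P.real (s ∆ D) < ε ∧ P.real (C ∩ D) = P.real C * P.real D) :
    P s = 0 ∨ P s = 1 := by
  set a := P.real s
  have hidem : a = a * a := by
    refine eq_of_forall_dist_le fun ε hε => ?_
    obtain ⟨C, D, hC, hD, hsC, hsD, hCD⟩ := h (ε / 4) (by positivity)
    have hinter : |a - P.real (C ∩ D)| ≤ ε / 2 := calc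
      _ ≤ P.real (s ∆ (C ∩ D)) :=
        abs_measureReal_sub_le_measureReal_symmDiff hs.nullMeasurableSet
          (hC.inter hD).nullMeasurableSet
      _ ≤ P.real (s ∆ C ∪ s ∆ D) := measureReal_mono fun x => by
          simp only [mem_symmDiff, mem_union, mem_inter_iff]; tauto
      _ ≤ P.real (s ∆ C) + P.real (s ∆ D) := measureReal_union_le _ _
      _ ≤ ε / 2 := by linarith
    have hCa := abs_measureReal_sub_le_measureReal_symmDiff (μ := P) hC.nullMeasurableSet
      hs.nullMeasurableSet
    have hDa := abs_measureReal_sub_le_measureReal_symmDiff (μ := P) hD.nullMeasurableSet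
      hs.nullMeasurableSet
    rw [symmDiff_comm] at hCa hDa
    have hprod : |P.real (C ∩ D) - a * a| ≤ ε / 2 := by
      rw [hCD, show P.real C * P.real D - a * a = (P.real C - a) * P.real D + a * (P.real D - a)
        by ring]
      refine (abs_add_le _ _).trans ?_
      rw [abs_mul, abs_mul, abs_of_nonneg measureReal_nonneg, abs_of_nonneg measureReal_nonneg]
      have := measureReal_le_one (μ := P) (s := D)
      have := measureReal_le_one (μ := P) (s := s)
      nlinarith [abs_nonneg (P.real C - a), abs_nonneg (P.real D - a)]
    calc dist a (a * a) ≤ |a - P.real (C ∩ D)| + |P.real (C ∩ D) - a * a| := abs_sub_le _ _ _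
      _ ≤ ε := by linarith
  have ha : a = 0 ∨ a = 1 := by
    rcases mul_eq_zero.1 (show a * (a - 1) = 0 by linarith) with h0 | h1
    exacts [Or.inl h0, Or.inr (sub_eq_zero.1 h1)]
  rw [measureReal_eq_zero_iff] at ha
  exact ha.imp_right (ENNReal.toReal_eq_one_iff _).1

theorem exists_smul_disjoint_of_infinite_orbit {Γ I : Type*} [Group Γ] [MulAction Γ I]
    (h : ∀ i : I, (orbit Γ i).Infinite) (J : Finset I) :
    ∃ γ : Γ, Disjoint (γ • (J : Set I)) J := by
  classical
  by_contra! hmeet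
  choose! g hg using fun p : I × I => (mem_orbit_iff.1 : p.2 ∈ orbit Γ p.1 → _)
  -- Every `γ` moves some point of `J` into `J`, so `Γ` is covered by finitely many cosets
  -- of point stabilizers, and one of them has finite index.
  have hcover : ⋃ p ∈ (J ×ˢ J).filter (fun p => p.2 ∈ orbit Γ p.1),
      g p • (stabilizer Γ p.1 : Set Γ) = univ := by
    refine eq_univ_of_forall fun γ => ?_
    obtain ⟨_, ⟨i, hi, rfl⟩, hγi⟩ := not_disjoint_iff.1 (hmeet γ)
    have hmem : (i, γ • i).2 ∈ orbit Γ (i, γ • i).1 := mem_orbit i γ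
    refine mem_biUnion (Finset.mem_filter.2 ⟨Finset.mem_product.2 ⟨hi, hγi⟩, hmem⟩) ?_
    rw [mem_leftCoset_iff, SetLike.mem_coe, mem_stabilizer_iff, mul_smul, inv_smul_eq_iff,
      hg _ hmem]
  obtain ⟨p, -, hp⟩ := Subgroup.exists_finiteIndex_of_leftCoset_cover hcover
  refine h p.1 (finite_of_ncard_ne_zero ?_)
  rw [← index_stabilizer]
  exact hp.index_ne_zero

section BernoulliShift

variable {Γ I Y : Type*} [Group Γ] [MulAction Γ I] [mY : MeasurableSpace Y]

def bernoulliShift (γ : Γ) (f : I → Y) : I → Y := fun i => f (γ⁻¹ • i)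

abbrev coordSigma (J : Set I) : MeasurableSpace (I → Y) :=
  ⨆ i ∈ J, mY.comap fun f => f i

theorem coordSigma_le (J : Set I) : coordSigma (Y := Y) J ≤ MeasurableSpace.pi :=
  iSup₂_le fun i _ => (measurable_pi_apply i).comap_le

theorem measurable_restrict_coordSigma (J : Finset I) :
    Measurable[coordSigma (J : Set I)] (J.restrict : (I → Y) → J → Y) :=
  @measurable_pi_lambda _ _ _ (coordSigma (J : Set I)) _ _ fun j => Measurable.of_comap_le
    (le_iSup₂ (f := fun i (_ : i ∈ (J : Set I)) => mY.comap fun f : I → Y => f i) j.1 j.2)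

theorem measurable_bernoulliShift_coordSigma {γ : Γ} {J K : Set I} (hJK : γ⁻¹ • J ⊆ K) :
    Measurable[coordSigma K, coordSigma J] (bernoulliShift γ : (I → Y) → I → Y) := by
  rw [measurable_iff_comap_le, coordSigma, MeasurableSpace.comap_iSup]
  refine iSup_le fun i => ?_
  rw [MeasurableSpace.comap_iSup]
  refine iSup_le fun hi => ?_
  rw [MeasurableSpace.comap_comp]
  exact le_iSup₂_of_le (f := fun i (_ : i ∈ K) => mY.comap fun f : I → Y => f i)
    (γ⁻¹ • i) (hJK (smul_mem_smul_set hi)) le_rfl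

variable (ν : Measure Y) [IsProbabilityMeasure ν]

theorem indep_coordSigma_of_disjoint {J K : Set I} (h : Disjoint J K) :
    Indep (coordSigma J) (coordSigma K) (Measure.infinitePi fun _ : I => ν) := by
  have hind : iIndepFun (fun i (f : I → Y) => f i) (Measure.infinitePi fun _ : I => ν) := by
    rw [iIndepFun_iff_map_fun_eq_infinitePi_map fun i => measurable_pi_apply i]
    simp only [Measure.infinitePi_map_eval]
    exact Measure.map_id
  exact indep_iSup_of_disjoint (fun i => (measurable_pi_apply i).comap_le)
    ((iIndepFun_iff_iIndep _ _ _).1 hind) h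

theorem measurePreserving_bernoulliShift (γ : Γ) :
    MeasurePreserving (bernoulliShift γ : (I → Y) → I → Y) (Measure.infinitePi fun _ => ν)
      (Measure.infinitePi fun _ => ν) := by
  have h := Measure.infinitePi_map_piCongrLeft (fun _ : I => ν) (MulAction.toPerm γ)
  have he : ⇑(MeasurableEquiv.piCongrLeft (fun _ : I => Y) (MulAction.toPerm γ)) =
      bernoulliShift γ := by
    ext f i
    simp [bernoulliShift, MeasurableEquiv.piCongrLeft, Equiv.piCongrLeft_apply]
  rw [he] at h
  exact ⟨he ▸ (MeasurableEquiv.measurable _), h⟩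

theorem isErgodicAction_bernoulliShift_of_infinite_orbit (h : ∀ i : I, (orbit Γ i).Infinite) :
    IsErgodicAction (bernoulliShift (Γ := Γ) (I := I) (Y := Y))
      (Measure.infinitePi fun _ => ν) := by
  intro s hs hinv
  set P := Measure.infinitePi fun _ : I => ν
  have hdense : P.MeasureDense (measurableCylinders fun _ : I => Y) :=
    .of_generateFrom_isSetAlgebra_finite _ isSetAlgebra_measurableCylinders
      generateFrom_measurableCylinders.symm
  refine measure_eq_zero_or_one_of_forall_approx_indep hs fun ε hε => ?_
  obtain ⟨C, hCcyl, hsC⟩ := hdense.approx s hs (measure_ne_top P s) ε hε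
  obtain ⟨J, S, hS, rfl⟩ := (mem_measurableCylinders _).1 hCcyl
  obtain ⟨γ, hγ⟩ := exists_smul_disjoint_of_infinite_orbit h J
  have hC : MeasurableSet[coordSigma (J : Set I)] (cylinder J S) :=
    measurable_restrict_coordSigma J hS
  have hD : MeasurableSet[coordSigma (γ • (J : Set I))]
      (bernoulliShift γ⁻¹ ⁻¹' cylinder J S) :=
    measurable_bernoulliShift_coordSigma (J := (J : Set I)) (by rw [inv_inv]) hC
  have hT := measurePreserving_bernoulliShift (I := I) ν γ⁻¹
  have hsC' : P.real (s ∆ cylinder J S) < ε :=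
    (ENNReal.lt_ofReal_iff_toReal_lt (measure_ne_top _ _)).1 hsC
  refine ⟨_, _, coordSigma_le _ _ hC, coordSigma_le _ _ hD, hsC', ?_, ?_⟩
  · rwa [← hinv γ⁻¹, ← preimage_symmDiff, hT.measureReal_preimage]
    exact (hs.symmDiff (coordSigma_le _ _ hC)).nullMeasurableSet
  · rw [measureReal_def, measureReal_def, measureReal_def, ← ENNReal.toReal_mul,
      (Indep_iff _ _ _).1 (indep_coordSigma_of_disjoint ν hγ.symm) _ _ hC hD]

theorem infinite_orbit_of_isErgodicAction_bernoulliShift {t : Set Y} (ht : MeasurableSet t)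
    (ht0 : 0 < ν t) (ht1 : ν t < 1)
    (herg : IsErgodicAction (bernoulliShift (Γ := Γ) (I := I) (Y := Y))
      (Measure.infinitePi fun _ => ν)) (i : I) :
    (orbit Γ i).Infinite := by
  intro hfin
  set O := hfin.toFinset
  have hinv : ∀ γ : Γ, bernoulliShift γ ⁻¹' (O : Set I).pi (fun _ => t) =
      (O : Set I).pi fun _ => t := by
    intro γ
    ext f
    simp only [O, Finite.coe_toFinset, mem_preimage, mem_pi, bernoulliShift]
    refine ⟨fun hf j hj => ?_, fun hf j hj => hf _ (mem_orbit_of_mem_orbit γ⁻¹ hj)⟩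
    simpa using hf _ (mem_orbit_of_mem_orbit γ hj)
  have hcard : O.card ≠ 0 := Finset.card_ne_zero_of_mem (hfin.mem_toFinset.2 (mem_orbit_self i))
  rcases herg _ (.pi O.countable_toSet fun _ _ => ht) hinv with h | h <;>
    rw [Measure.infinitePi_pi _ fun _ _ => ht, Finset.prod_const] at h
  · exact ht0.ne' ((pow_eq_zero_iff hcard).1 h)
  · exact (h ▸ pow_le_of_le_one zero_le ht1.le hcard).not_gt ht1

theorem infinite_orbit_sigma_mk {κ X : Type*} [MulAction Γ X] {x : X}
    (h : (orbit Γ x).Infinite) (k : κ) : (orbit Γ (⟨k, x⟩ : Σ _ : κ, X)).Infinite :=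
  (h.image sigma_mk_injective.injOn).mono <| by
    rintro _ ⟨_, ⟨γ, rfl⟩, rfl⟩
    exact ⟨γ, rfl⟩

end BernoulliShift

theorem measurePreserving_piCurry_infinitePi {κ X Y : Type*} [Fintype κ] [MeasurableSpace Y]
    (ν : Measure Y) [IsProbabilityMeasure ν] :
    MeasurePreserving (MeasurableEquiv.piCurry fun (_ : κ) (_ : X) => Y)
      (Measure.infinitePi fun _ => ν) (Measure.pi fun _ => Measure.infinitePi fun _ => ν) := by
  refine ⟨(MeasurableEquiv.piCurry _).measurable, ?_⟩
  rw [← Measure.infinitePi_eq_pi]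
  exact Measure.infinitePi_map_piCurry fun (_ : κ) (_ : X) => ν

theorem bernoulli_ergodic_implies_highly_ergodic_general
    {Γ X Y : Type*} [Group Γ] [MulAction Γ X]
    [MeasurableSpace Y] [StandardBorelSpace Y]
    (ν : Measure Y) [IsProbabilityMeasure ν]
    (hν : ∀ y : Y, ν {y} ≠ 1)
    (μ : Measure (X → Y)) [IsProbabilityMeasure μ]
    (hprod : ∀ (s : Finset X) (t : X → Set Y), (∀ x, MeasurableSet (t x)) →
      μ {f | ∀ x ∈ s, f x ∈ t x} = ∏ x ∈ s, ν (t x))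
    (herg : IsErgodicAction (fun (γ : Γ) (f : X → Y) => fun x => f (γ⁻¹ • x)) μ) :
    ∀ n : ℕ, 1 ≤ n →
      IsErgodicAction (fun (γ : Γ) (v : Fin n → X → Y) => fun i x => v i (γ⁻¹ • x))
        (Measure.pi fun _ : Fin n => μ) := by
  intro n _
  obtain rfl : μ = Measure.infinitePi fun _ => ν := Measure.eq_infinitePi _ hprod
  obtain ⟨t, ht, ht0, ht1⟩ := exists_measure_pos_lt_one ν hν
  have horbit := infinite_orbit_of_isErgodicAction_bernoulliShift ν ht ht0 ht1 herg
  -- `piCurry` identifies the diagonal action with the shift over `Σ _ : Fin n, X`.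
  exact (isErgodicAction_bernoulliShift_of_infinite_orbit ν
    fun ⟨k, x⟩ => infinite_orbit_sigma_mk (horbit x) k).of_semiconj
    (measurePreserving_piCurry_infinitePi ν) fun _ => rfl

/-- Let `Γ` be a countable group acting on a countable set `X`, `Y` a standard Borel
probability space whose measure `ν` does not concentrate on a single point, and
`μ` the product measure on `Y^X` (characterized by its values on cylinder sets).
If the generalised Bernoulli shift action of `Γ` on `Y^X` is ergodic, then it is
highly ergodic: the diagonal action on `(Y^X)^n` is ergodic for all `n ≥ 1`. -/
theorem bernoulli_ergodic_implies_highly_ergodic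
    {Γ X Y : Type*} [Group Γ] [Countable Γ] [Countable X] [MulAction Γ X]
    [MeasurableSpace Y] [StandardBorelSpace Y]
    (ν : Measure Y) [IsProbabilityMeasure ν]
    (hν : ∀ y : Y, ν {y} ≠ 1)
    (μ : Measure (X → Y)) [IsProbabilityMeasure μ]
    (hprod : ∀ (s : Finset X) (t : X → Set Y), (∀ x, MeasurableSet (t x)) →
      μ {f | ∀ x ∈ s, f x ∈ t x} = ∏ x ∈ s, ν (t x))
    (herg : IsErgodicAction (fun (γ : Γ) (f : X → Y) => fun x => f (γ⁻¹ • x)) μ) :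
    ∀ n : ℕ, 1 ≤ n →
      IsErgodicAction (fun (γ : Γ) (v : Fin n → X → Y) => fun i x => v i (γ⁻¹ • x))
        (Measure.pi fun _ : Fin n => μ) :=
  bernoulli_ergodic_implies_highly_ergodic_general ν hν μ hprod herg
end

section
/- The group IET([0,∞)) has commuting cyclic conjugates: for every finitely generated subgroup H ≤ IET([0,∞)) there exists n ≥ 1 with H ≤ IET([0,n)) (identified with its image), and the interval exchange transformation t swapping [0,n) and [n,2n) by translation satisfies tHt^{-1} ≤ IET([n,2n)), hence [H, tHt^{-1}] = 1, and t² = id. -/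
/-- The half line `[0, ∞)`. -/
abbrev HalfLine : Type := {x : ℝ // 0 ≤ x}

/-- An interval exchange transformation of the half line `[0, ∞)`: a bijection of
`[0, ∞)` obtained by cutting `[0, ∞)` at finitely many points
`0 = a₀ < a₁ < ⋯ < a_k` and translating each half-open piece `[a_i, a_{i+1})`
(and the unbounded piece `[a_k, ∞)`) by some constant. -/
def IsIET (f : Equiv.Perm HalfLine) : Prop :=
  ∃ (k : ℕ) (a : Fin (k + 1) → ℝ) (d : Fin (k + 1) → ℝ), a 0 = 0 ∧ StrictMono a ∧
    (∀ i : Fin k, ∀ x : HalfLine, a i.castSucc ≤ (x : ℝ) → (x : ℝ) < a i.succ →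
      (f x : ℝ) = (x : ℝ) + d i.castSucc) ∧
    (∀ x : HalfLine, a (Fin.last k) ≤ (x : ℝ) →
      (f x : ℝ) = (x : ℝ) + d (Fin.last k))

/-!
An interval exchange `f` is the identity beyond its last cut point `L`: there it translates by
some `D`, so it maps `[0, L)` bijectively onto `[0, L + D)` by finitely many translations, and
comparing Lebesgue measures gives `D = 0`. Hence a finitely generated `H` fixes `[n, ∞)` for
some `n`, and conjugating by the involution `t` exchanging `[0, n)` and `[n, 2n)` moves `H`
into permutations fixing `[0, n)`, which commute with `H`.
-/

open Set Filter MeasureTheory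
open scoped Function

theorem Monotone.pairwise_disjoint_on_Ico_castSucc_succ {α : Type*} [Preorder α] {k : ℕ}
    {a : Fin (k + 1) → α} (ha : Monotone a) :
    Pairwise (Disjoint on fun i : Fin k => Ico (a i.castSucc) (a i.succ)) :=
  (pairwise_disjoint_on _).2 fun _ _ hij => Set.disjoint_left.2 fun _ hi hj =>
    hi.2.not_ge ((ha (Fin.succ_le_castSucc_iff.2 hij)).trans hj.1)

theorem Monotone.iUnion_Ico_castSucc_succ {α : Type*} [LinearOrder α] :
    ∀ {k : ℕ} {a : Fin (k + 1) → α}, Monotone a →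
      ⋃ i : Fin k, Ico (a i.castSucc) (a i.succ) = Ico (a 0) (a (Fin.last k))
  | 0, a, _ => by simp
  | k + 1, a, ha => by
    rw [iUnion_fin_add_one_eq_iUnion_castSucc]
    have ih := Monotone.iUnion_Ico_castSucc_succ (a := a ∘ Fin.castSucc)
      (ha.comp Fin.strictMono_castSucc.monotone)
    simp only [Function.comp_apply, Fin.castSucc_zero] at ih
    simp only [Function.comp_def, Fin.succ_castSucc, Fin.succ_last]
    rw [ih]
    exact Ico_union_Ico_eq_Ico (ha (Fin.zero_le _)) (ha (Fin.castSucc_le_succ _))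

theorem measure_image_iUnion_of_eqOn_add_const {G ι : Type*} [MeasurableSpace G] [AddGroup G]
    [MeasurableAdd G] {μ : Measure G} [μ.IsAddRightInvariant] [Countable ι] {s : ι → Set G}
    (hs : ∀ i, MeasurableSet (s i)) (hd : Pairwise (Disjoint on s)) {g : G → G}
    {c : ι → G} (hg : ∀ i, EqOn g (· + c i) (s i)) (hinj : InjOn g (⋃ i, s i)) :
    μ (g '' ⋃ i, s i) = μ (⋃ i, s i) := by
  have himage : ∀ i, g '' s i = (· + -c i) ⁻¹' s i := fun i => by
    rw [(hg i).image_eq, image_add_right]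
  rw [image_iUnion, measure_iUnion _ fun i => himage i ▸ measurable_add_const _ (hs i),
    measure_iUnion hd hs]
  · simp only [himage, measure_preimage_add_right]
  · exact fun i j hij => (hd hij).image hinj (subset_iUnion s i) (subset_iUnion s j)

theorem Equiv.Perm.image_setOf_lt_of_eq_add (f : Equiv.Perm HalfLine) {L D : ℝ} (hL : 0 ≤ L)
    (hf : ∀ x : HalfLine, L ≤ (x : ℝ) → (f x : ℝ) = x + D) :
    f '' {x | (x : ℝ) < L} = {y : HalfLine | (y : ℝ) < L + D} := by
  have hIci : f '' {x | L ≤ (x : ℝ)} = {y : HalfLine | L + D ≤ (y : ℝ)} := by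
    ext y
    constructor
    · rintro ⟨x, hx, rfl⟩
      simp only [mem_ofPred_eq, hf x hx] at hx ⊢
      linarith
    · intro hy
      simp only [mem_ofPred_eq] at hy
      refine ⟨⟨y - D, by linarith⟩, by simp only [mem_ofPred_eq]; linarith, Subtype.ext ?_⟩
      rw [hf _ (by simp only; linarith)]
      ring
  simpa only [compl_ofPred, not_le] using (f.image_compl _).trans (congrArg compl hIci)

theorem IsIET.eventually_apply_eq_self {f : Equiv.Perm HalfLine} (hf : IsIET f) :
    ∀ᶠ c in atTop, ∀ x : HalfLine, c ≤ (x : ℝ) → f x = x := by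
  obtain ⟨k, a, d, ha0, ha, hpiece, hlast⟩ := hf
  set L := a (Fin.last k)
  set D := d (Fin.last k)
  have hL : 0 ≤ L := ha0 ▸ ha.monotone (Fin.zero_le _)
  have hLD : 0 ≤ L + D := hlast ⟨L, hL⟩ le_rfl ▸ (f ⟨L, hL⟩).2
  -- extend `f` to `ℝ` so that Lebesgue measure can compare `[0, L)` with its image `[0, L + D)`
  let g : ℝ → ℝ := fun x => if h : 0 ≤ x then f ⟨x, h⟩ else x
  have hg : ∀ x : HalfLine, g x = f x := fun x => dif_pos x.2
  have hpieces : ⋃ i : Fin k, Ico (a i.castSucc) (a i.succ) = Ico 0 L :=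
    ha0 ▸ ha.monotone.iUnion_Ico_castSucc_succ
  have hg_piece : ∀ i : Fin k, EqOn g (· + d i.castSucc) (Ico (a i.castSucc) (a i.succ)) :=
    fun i x hx => by
      have hx0 : 0 ≤ x := (ha0 ▸ ha.monotone (Fin.zero_le i.castSucc)).trans hx.1
      exact (hg ⟨x, hx0⟩).trans (hpiece i ⟨x, hx0⟩ hx.1 hx.2)
  have hg_inj : InjOn g (Ici 0) := fun x hx y hy hxy => congrArg Subtype.val <|
    f.injective <| Subtype.ext <| (hg ⟨x, hx⟩).symm.trans (hxy.trans (hg ⟨y, hy⟩))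
  have himage : g '' Ico 0 L = Ico 0 (L + D) := by
    have hval : ∀ M, Ico 0 M = Subtype.val '' {x : HalfLine | (x : ℝ) < M} := fun M => by
      ext; simp [and_comm]
    rw [hval, hval, image_image, image_congr fun x _ => hg x, ← image_image,
      f.image_setOf_lt_of_eq_add hL hlast]
  have hvol := measure_image_iUnion_of_eqOn_add_const (μ := volume)
    (fun i => measurableSet_Ico) ha.monotone.pairwise_disjoint_on_Ico_castSucc_succ hg_piece
    (hpieces ▸ hg_inj.mono Ico_subset_Ici_self)
  rw [hpieces, himage, Real.volume_Ico, Real.volume_Ico,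
    ENNReal.ofReal_eq_ofReal_iff (by linarith) (by linarith)] at hvol
  filter_upwards [eventually_ge_atTop L] with c hc x hx
  exact Subtype.ext (by rw [hlast x (hc.trans hx)]; linarith)

def fixingIci (c : ℝ) : Subgroup (Equiv.Perm HalfLine) :=
  fixingSubgroup (Equiv.Perm HalfLine) {x : HalfLine | c ≤ (x : ℝ)}

theorem mem_fixingIci {c : ℝ} {h : Equiv.Perm HalfLine} :
    h ∈ fixingIci c ↔ ∀ x : HalfLine, c ≤ (x : ℝ) → h x = x :=
  mem_fixingSubgroup_iff _

theorem exists_nat_le_fixingIci_of_fg (H : Subgroup (Equiv.Perm HalfLine)) (hfg : H.FG)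
    (hIET : ∀ h ∈ H, IsIET h) :
    ∃ n : ℕ, 1 ≤ n ∧ H ≤ fixingIci n := by
  obtain ⟨S, rfl⟩ := hfg
  have hS : ∀ᶠ n : ℕ in atTop, ∀ s ∈ S, ∀ x : HalfLine, (n : ℝ) ≤ x → s x = x :=
    (eventually_all_finset S).2 fun s hs => tendsto_natCast_atTop_atTop.eventually
      (hIET s (Subgroup.subset_closure hs)).eventually_apply_eq_self
  obtain ⟨n, hn, hn1⟩ := (hS.and (eventually_ge_atTop 1)).exists
  exact ⟨n, hn1, (Subgroup.closure_le _).2 fun s hs =>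
    mem_fixingIci.2 fun x hx => hn s hs x hx⟩

noncomputable def swapIcoFun (c : ℝ) (x : HalfLine) : HalfLine :=
  if h : (x : ℝ) < c then ⟨x + c, by linarith [x.2]⟩
  else if (x : ℝ) < 2 * c then ⟨x - c, by linarith⟩
  else x

theorem swapIcoFun_involutive (c : ℝ) : Function.Involutive (swapIcoFun c) := by
  intro x
  have hx := x.2
  unfold swapIcoFun
  split_ifs <;> (try ext) <;> simp at * <;> linarith

noncomputable def swapIco (c : ℝ) : Equiv.Perm HalfLine :=
  (swapIcoFun_involutive c).toPerm

theorem swapIco_sq (c : ℝ) : swapIco c ^ 2 = 1 :=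
  Equiv.ext (swapIcoFun_involutive c)

theorem swapIco_inv (c : ℝ) : (swapIco c)⁻¹ = swapIco c :=
  Function.Involutive.toPerm_symm _

section

variable {c : ℝ} {x : HalfLine}

theorem coe_swapIco_of_lt (hx : (x : ℝ) < c) : (swapIco c x : ℝ) = x + c := by
  simp [swapIco, swapIcoFun, hx]

theorem coe_swapIco_of_le_of_lt (hx₁ : c ≤ (x : ℝ)) (hx₂ : (x : ℝ) < 2 * c) :
    (swapIco c x : ℝ) = x - c := by
  simp [swapIco, swapIcoFun, hx₁.not_gt, hx₂]

theorem swapIco_of_le (hc : 0 ≤ c) (hx : 2 * c ≤ (x : ℝ)) : swapIco c x = x := by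
  simp [swapIco, swapIcoFun, (show c ≤ (x : ℝ) by linarith).not_gt, hx.not_gt]

theorem isIET_swapIco (hc : 0 < c) : IsIET (swapIco c) := by
  refine ⟨2, ![0, c, 2 * c], ![c, -c, 0], rfl, ?_, ?_, fun x hx => ?_⟩
  · simp only [Fin.strictMono_iff_lt_succ, Fin.forall_fin_two]
    constructor <;> simp <;> linarith
  · simp only [Fin.forall_fin_two]
    exact ⟨fun x _ hx => coe_swapIco_of_lt hx,
      fun x hx₁ hx₂ => (coe_swapIco_of_le_of_lt hx₁ hx₂).trans (sub_eq_add_neg _ _)⟩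
  · simpa using congrArg Subtype.val (swapIco_of_le hc.le hx)

end

theorem commute_swapIco_conj {c : ℝ} {h h' : Equiv.Perm HalfLine} (hh : h ∈ fixingIci c)
    (hh' : h' ∈ fixingIci c) :
    Commute h (swapIco c * h' * (swapIco c)⁻¹) := by
  refine Equiv.Perm.Disjoint.commute fun x => ?_
  rcases le_or_gt c x with hx | hx
  · exact .inl (mem_fixingIci.1 hh x hx)
  · right
    have : c ≤ ((swapIco c)⁻¹ x : ℝ) := by
      rw [swapIco_inv, coe_swapIco_of_lt hx]
      linarith [x.2]
    rw [Equiv.Perm.mul_apply, Equiv.Perm.mul_apply, mem_fixingIci.1 hh' _ this]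
    exact (swapIco c).apply_symm_apply x

/-- `IET([0,∞))` has commuting cyclic conjugates: every finitely generated group
`H` of interval exchange transformations of `[0, ∞)` is supported on `[0, n)` for
some `n ≥ 1`, and the interval exchange transformation `t` swapping `[0, n)` and
`[n, 2n)` by translations satisfies `t² = 1` and `[H, t H t⁻¹] = 1`. -/
theorem iet_halfLine_commutingCyclicConjugates
    (H : Subgroup (Equiv.Perm HalfLine)) (hfg : H.FG)
    (hIET : ∀ h ∈ H, IsIET h) :
    ∃ n : ℕ, 1 ≤ n ∧ (∀ h ∈ H, ∀ x : HalfLine, (n : ℝ) ≤ (x : ℝ) → h x = x) ∧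
      ∃ t : Equiv.Perm HalfLine, IsIET t ∧ t ^ 2 = 1 ∧
        ∀ h ∈ H, ∀ h' ∈ H, Commute h (t * h' * t⁻¹) := by
  obtain ⟨n, hn, hH⟩ := exists_nat_le_fixingIci_of_fg H hfg hIET
  exact ⟨n, hn, fun h hh => mem_fixingIci.1 (hH hh), swapIco n,
    isIET_swapIco (by exact_mod_cast hn), swapIco_sq n,
    fun h hh h' hh' => commute_swapIco_conj (hH hh) (hH hh')⟩
end
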